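/- arXiv:1202.5977 — 5 statements merged into one kernel-verified Lean document; each statement's English description precedes it below -/
import Mathlib

section
/- Let S be a left cancellative monoid. S satisfies Clifford's condition (for all s, t ∈ S, either sS ∩ tS = ∅ or sS ∩ tS = rS for some r) if and only if for every s, t ∈ S with the set t⁻¹(sS) = {u : t*u ∈ sS} nonempty, there exists r ∈ S with t⁻¹(sS) = rS. -/
/-!
Left multiplication by `t` maps `t⁻¹(sS)` onto `sS ∩ tS`, and maps the principal right ideal
`rS` onto `(tr)S`. So a generator of `t⁻¹(sS)` yields one of `sS ∩ tS`. Conversely, a generator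
`r` of `sS ∩ tS` lies in `tS`, say `r = tr'`, and since left multiplication by `t` is injective
the equality `t · t⁻¹(sS) = t · r'S` cancels to `t⁻¹(sS) = r'S`.
-/

section PrincipalRightIdeals

variable {S : Type*} [Monoid S]

theorem mem_range_mul_left_self (r : S) : r ∈ Set.range (r * ·) := ⟨1, mul_one r⟩

theorem image_mul_left_range_mul_left (t r : S) :
    (t * ·) '' Set.range (r * ·) = Set.range (t * r * ·) := by
  rw [← Set.range_comp]
  simp only [Function.comp_def, mul_assoc]

theorem range_mul_left_inter_eq_image_preimage (s t : S) :
    Set.range (s * ·) ∩ Set.range (t * ·) = (t * ·) '' ((t * ·) ⁻¹' Set.range (s * ·)) :=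
  Set.image_preimage_eq_inter_range.symm

theorem exists_eq_range_mul_left_of_image_eq {t r : S} (ht : Function.Injective (t * ·))
    {P : Set S} (hP : (t * ·) '' P = Set.range (r * ·)) : ∃ r' : S, P = Set.range (r' * ·) := by
  obtain ⟨r', -, rfl⟩ : r ∈ (t * ·) '' P := hP ▸ mem_range_mul_left_self r
  exact ⟨r', Set.image_injective.mpr ht (hP.trans (image_mul_left_range_mul_left t r').symm)⟩

end PrincipalRightIdeals

/-- A left cancellative monoid satisfies Clifford's condition iff every nonempty
set `t⁻¹(sS)` is a principal right ideal. -/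
theorem stmt5 {S : Type*} [Monoid S] (hc : ∀ a b c : S, a * b = a * c → b = c) :
    (∀ s t : S, Set.range (s * ·) ∩ Set.range (t * ·) = ∅ ∨
        ∃ r : S, Set.range (s * ·) ∩ Set.range (t * ·) = Set.range (r * ·)) ↔
      (∀ s t : S, {u : S | t * u ∈ Set.range (s * ·)}.Nonempty →
        ∃ r : S, {u : S | t * u ∈ Set.range (s * ·)} = Set.range (r * ·)) := by
  simp only [range_mul_left_inter_eq_image_preimage, Set.image_eq_empty]
  constructor
  · intro H s t hne
    rcases H s t with hempty | ⟨r, hr⟩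
    · exact absurd hempty hne.ne_empty
    · exact exists_eq_range_mul_left_of_image_eq (hc t) hr
  · intro H s t
    refine or_iff_not_imp_left.mpr fun hne => ?_
    obtain ⟨r, hr⟩ := H s t (Set.nonempty_iff_ne_empty.mpr hne)
    exact ⟨t * r, (congrArg ((t * ·) '' ·) hr).trans (image_mul_left_range_mul_left t r)⟩
end

section
/- Let S be an algebraically ordered left cancellative monoid. Then S satisfies Clifford's condition if and only if every pair of elements of S that has a common lower bound (in the algebraic order) has a greatest lower bound. -/
open Set

section PrincipalRightIdeals

variable {S : Type*} [Monoid S]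

lemma range_mul_subset_of_mem_range {s r : S} (hr : r ∈ range (s * ·)) :
    range (r * ·) ⊆ range (s * ·) := by
  rintro _ ⟨c, rfl⟩
  obtain ⟨a, rfl⟩ := hr
  exact ⟨a * c, (mul_assoc s a c).symm⟩

lemma inter_range_mul_eq_range_mul_iff (s t r : S) :
    range (s * ·) ∩ range (t * ·) = range (r * ·) ↔
      r ∈ range (s * ·) ∧ r ∈ range (t * ·) ∧
        ∀ u : S, u ∈ range (s * ·) → u ∈ range (t * ·) → u ∈ range (r * ·) := by
  constructor
  · intro h
    have hr : r ∈ range (s * ·) ∩ range (t * ·) := h ▸ ⟨1, mul_one r⟩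
    exact ⟨hr.1, hr.2, fun u hs ht => h ▸ ⟨hs, ht⟩⟩
  · rintro ⟨hs, ht, hglb⟩
    exact Subset.antisymm (fun u ⟨hus, hut⟩ => hglb u hus hut)
      (subset_inter (range_mul_subset_of_mem_range hs) (range_mul_subset_of_mem_range ht))

end PrincipalRightIdeals

theorem stmt6_general {S : Type*} [Monoid S] :
    (∀ s t : S, Set.range (s * ·) ∩ Set.range (t * ·) = ∅ ∨
        ∃ r : S, Set.range (s * ·) ∩ Set.range (t * ·) = Set.range (r * ·)) ↔
      (∀ s t : S, (∃ u : S, u ∈ Set.range (s * ·) ∧ u ∈ Set.range (t * ·)) →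
        ∃ w : S, w ∈ Set.range (s * ·) ∧ w ∈ Set.range (t * ·) ∧
          ∀ u : S, u ∈ Set.range (s * ·) → u ∈ Set.range (t * ·) →
            u ∈ Set.range (w * ·)) := by
  constructor
  · intro hClifford s t hlower
    rcases hClifford s t with hempty | ⟨r, hr⟩
    · obtain ⟨u, hus, hut⟩ := hlower
      exact absurd (hempty ▸ ⟨hus, hut⟩ : u ∈ (∅ : Set S)) (notMem_empty u)
    · exact ⟨r, (inter_range_mul_eq_range_mul_iff s t r).mp hr⟩
  · intro hglb s t
    by_cases hlower : ∃ u : S, u ∈ range (s * ·) ∧ u ∈ range (t * ·)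
    · obtain ⟨w, hw⟩ := hglb s t hlower
      exact Or.inr ⟨w, (inter_range_mul_eq_range_mul_iff s t w).mpr hw⟩
    · exact Or.inl (eq_empty_of_forall_notMem fun u hu => hlower ⟨u, hu⟩)

/-- An algebraically ordered left cancellative monoid satisfies Clifford's condition
iff every pair of elements with a common lower bound has a greatest lower bound. -/
theorem stmt6 {S : Type*} [Monoid S] (hc : ∀ a b c : S, a * b = a * c → b = c)
    (hanti : ∀ s t : S, s ∈ Set.range (t * ·) → t ∈ Set.range (s * ·) → s = t) :
    (∀ s t : S, Set.range (s * ·) ∩ Set.range (t * ·) = ∅ ∨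
        ∃ r : S, Set.range (s * ·) ∩ Set.range (t * ·) = Set.range (r * ·)) ↔
      (∀ s t : S, (∃ u : S, u ∈ Set.range (s * ·) ∧ u ∈ Set.range (t * ·)) →
        ∃ w : S, w ∈ Set.range (s * ·) ∧ w ∈ Set.range (t * ·) ∧
          ∀ u : S, u ∈ Set.range (s * ·) → u ∈ Set.range (t * ·) →
            u ∈ Set.range (w * ·)) :=
  stmt6_general
end

section
/- Let R be an integral domain. The ax+b semigroup R ⋊ R^× (underlying set R × (R \ {0}), product (b,a)(d,c) = (b + a*d, a*c)) satisfies Clifford's condition if and only if the multiplicative monoid R^× = R \ {0} satisfies Clifford's condition (equivalently, every pair of nonzero elements of R has a least common multiple). -/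
/-- A monoid `T` satisfies Clifford's condition if every intersection of two
principal right ideals is empty or principal. -/
def CliffordCondition (T : Type*) [Monoid T] : Prop :=
  ∀ s t : T, Set.range (s * ·) ∩ Set.range (t * ·) = ∅ ∨
    ∃ r : T, Set.range (s * ·) ∩ Set.range (t * ·) = Set.range (r * ·)

/-- The `ax+b` semigroup over an integral domain `R`: underlying set `R × (R \ {0})`
with product `(b, a)(d, c) = (b + a d, a c)`. -/
structure AxB (R : Type*) [Zero R] where
  b : R
  a : R
  ha : a ≠ 0

variable {R : Type*} [CommRing R] [IsDomain R]

instance : Mul (AxB R) :=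
  ⟨fun x y => ⟨x.b + x.a * y.b, x.a * y.a, mul_ne_zero x.ha y.ha⟩⟩

instance : One (AxB R) := ⟨⟨0, 1, one_ne_zero⟩⟩

lemma AxB.mul_def (x y : AxB R) :
    x * y = ⟨x.b + x.a * y.b, x.a * y.a, mul_ne_zero x.ha y.ha⟩ := rfl

lemma AxB.one_def : (1 : AxB R) = ⟨0, 1, one_ne_zero⟩ := rfl

instance : Monoid (AxB R) where
  mul_assoc x y z := by
    simp only [AxB.mul_def, AxB.mk.injEq]
    constructor <;> ring
  one_mul x := by
    cases x
    simp [AxB.mul_def, AxB.one_def]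
  mul_one x := by
    cases x
    simp [AxB.mul_def, AxB.one_def]

/-- The multiplicative monoid `R^× = R \ {0}` of an integral domain. -/
instance : Monoid {a : R // a ≠ 0} where
  mul x y := ⟨x.1 * y.1, mul_ne_zero x.2 y.2⟩
  one := ⟨1, one_ne_zero⟩
  mul_assoc x y z := Subtype.ext (mul_assoc x.1 y.1 z.1)
  one_mul x := Subtype.ext (one_mul x.1)
  mul_one x := Subtype.ext (mul_one x.1)

/-!
`(b, a)` divides `(b', a')` on the left iff `a ∣ a'` and `b' ≡ b (mod a)`. If `x` and `y` have a
common right multiple `z`, both congruences can be centred at `z.b` instead, so the common right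
multiples of `x` and `y` are exactly the right multiples of `(z.b, m)` for `m` a least common
multiple of `x.a` and `y.a`. Conversely, the second coordinate of a generator of the common right
multiples of `x` and `y` is a least common multiple of `x.a` and `y.a`.
-/

def IsLCM {α : Type*} [Dvd α] (s t m : α) : Prop :=
  ∀ u, s ∣ u ∧ t ∣ u ↔ m ∣ u

theorem cliffordCondition_iff {T : Type*} [Monoid T] :
    CliffordCondition T ↔ ∀ s t : T, (∀ z, ¬(s ∣ z ∧ t ∣ z)) ∨ ∃ r, IsLCM s t r := by
  have mem_range (s z : T) : z ∈ Set.range (s * ·) ↔ s ∣ z :=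
    ⟨fun ⟨c, hc⟩ => ⟨c, hc.symm⟩, fun ⟨c, hc⟩ => ⟨c, hc.symm⟩⟩
  simp only [CliffordCondition, Set.ext_iff, Set.mem_inter_iff, mem_range, Set.mem_empty_iff_false,
    iff_false, IsLCM]

theorem nonZero_dvd_iff {s y : {a : R // a ≠ 0}} : s ∣ y ↔ s.1 ∣ y.1 := by
  refine ⟨fun ⟨c, hc⟩ => ⟨c.1, congrArg Subtype.val hc⟩, fun ⟨c, hc⟩ => ?_⟩
  have hc0 : c ≠ 0 := by rintro rfl; exact y.2 (by simpa using hc)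
  exact ⟨⟨c, hc0⟩, Subtype.ext hc⟩

theorem nonZero_isLCM_iff {s t m : {a : R // a ≠ 0}} : IsLCM s t m ↔ IsLCM s.1 t.1 m.1 := by
  refine ⟨fun h u => ?_, fun h y => by simpa only [nonZero_dvd_iff] using h y.1⟩
  by_cases hu : u = 0
  · simp [hu]
  · simpa only [nonZero_dvd_iff] using h ⟨u, hu⟩

theorem cliffordCondition_nonZero_iff :
    CliffordCondition {a : R // a ≠ 0} ↔
      ∀ s t : {a : R // a ≠ 0}, ∃ m : {a : R // a ≠ 0}, IsLCM s.1 t.1 m.1 := by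
  simp only [cliffordCondition_iff, ← nonZero_isLCM_iff]
  refine forall₂_congr fun s t => or_iff_right fun hno => hno (s * t) ⟨?_, ?_⟩
  · exact dvd_mul_right s t
  · exact nonZero_dvd_iff.2 (dvd_mul_left t.1 s.1)

namespace AxB

theorem dvd_iff {x z : AxB R} : x ∣ z ↔ x.a ∣ z.b - x.b ∧ x.a ∣ z.a := by
  constructor
  · rintro ⟨w, rfl⟩
    exact ⟨⟨w.b, by simp [mul_def]⟩, ⟨w.a, rfl⟩⟩
  · rintro ⟨⟨d, hd⟩, ⟨c, hc⟩⟩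
    have hc0 : c ≠ 0 := by rintro rfl; exact z.ha (by simpa using hc)
    refine ⟨⟨d, c, hc0⟩, ?_⟩
    cases z
    simp only [mul_def, mk.injEq] at hd hc ⊢
    exact ⟨by rw [← hd]; ring, hc⟩

theorem dvd_iff_of_dvd {x z : AxB R} (hxz : x ∣ z) (w : AxB R) :
    x ∣ w ↔ x.a ∣ w.b - z.b ∧ x.a ∣ w.a := by
  have hz := (dvd_iff.1 hxz).1
  rw [dvd_iff, ← sub_add_sub_cancel w.b z.b x.b, dvd_add_left hz]

theorem isLCM_a {x y r : AxB R} (h : IsLCM x y r) : IsLCM x.a y.a r.a := by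
  intro u
  by_cases hu : u = 0
  · simp [hu]
  obtain ⟨hxr, hyr⟩ := (h r).2 dvd_rfl
  -- the first coordinate of `(r.b, u)` is congruent to those of `x`, `y` and `r`
  simpa [dvd_iff_of_dvd hxr, dvd_iff_of_dvd hyr, dvd_iff_of_dvd (dvd_refl r)] using h ⟨r.b, u, hu⟩

theorem isLCM_of_dvd {x y z : AxB R} (hxz : x ∣ z) (hyz : y ∣ z) {m : R} (hm0 : m ≠ 0)
    (hm : IsLCM x.a y.a m) : IsLCM x y ⟨z.b, m, hm0⟩ := by
  intro w
  rw [dvd_iff_of_dvd hxz, dvd_iff_of_dvd hyz, and_and_and_comm, hm, hm, dvd_iff, and_comm]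

end AxB

/-- The `ax+b` semigroup over an integral domain `R` satisfies Clifford's condition
iff the multiplicative monoid `R \ {0}` does (iff every pair of nonzero elements of
`R` has a least common multiple). -/
theorem stmt8 :
    CliffordCondition (AxB R) ↔ CliffordCondition {a : R // a ≠ 0} := by
  rw [cliffordCondition_iff, cliffordCondition_nonZero_iff]
  constructor
  · intro h s t
    rcases h ⟨0, s.1, s.2⟩ ⟨0, t.1, t.2⟩ with hno | ⟨r, hr⟩
    · exact (hno ⟨0, s.1 * t.1, (s * t).2⟩ ⟨AxB.dvd_iff.2 ⟨by simp, dvd_mul_right _ _⟩,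
        AxB.dvd_iff.2 ⟨by simp, dvd_mul_left _ _⟩⟩).elim
    · exact ⟨⟨r.a, r.ha⟩, AxB.isLCM_a hr⟩
  · intro h x y
    refine or_iff_not_imp_left.2 fun hno => ?_
    obtain ⟨z, hxz, hyz⟩ := not_forall_not.1 hno
    obtain ⟨m, hm⟩ := h ⟨x.a, x.ha⟩ ⟨y.a, y.ha⟩
    exact ⟨_, AxB.isLCM_of_dvd hxz hyz m.2 hm⟩
end

section
/- Let S be a subsemigroup of a group G that generates G. Then S is left reversible (sS ∩ tS ≠ ∅ for all s, t ∈ S) if and only if S is a left thick subset of G, i.e. for every finite sequence g₁,…,gₙ ∈ G the intersection g₁S ∩ … ∩ gₙS is nonempty. -/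
/-! Reversibility lets one move any element of `S S⁻¹` back into `S` by a right factor from `S`:
if `x s₁, y s₂ ∈ S` and `s₁ a = y s₂ b` with `a, b ∈ S`, then `x y (s₂ b) = x s₁ a ∈ S`. Since `S`
generates `G`, every `g ∈ G` has some `s ∈ S` with `g s ∈ S`, i.e. `gS ∩ S ≠ ∅`, and a common point
of finitely many translates `gᵢS` is then pushed into one more translate by a further factor `s`. -/

open Set

namespace Submonoid

variable {G : Type*} [Group G] (S : Submonoid G)

def IsLeftReversible : Prop :=
  ∀ s ∈ S, ∀ t ∈ S, ∃ a ∈ S, ∃ b ∈ S, s * a = t * b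

/-- `g⁻¹ * x ∈ S` says `x ∈ g S`: every finite intersection of left translates of `S` is nonempty. -/
def IsLeftThick : Prop :=
  ∀ F : Finset G, ∃ x, ∀ g ∈ F, g⁻¹ * x ∈ S

variable {S}

theorem IsLeftReversible.exists_mul_mem_of_mem_closure (hS : S.IsLeftReversible) {g : G}
    (hg : g ∈ Subgroup.closure (S : Set G)) : ∃ s ∈ S, g * s ∈ S := by
  induction hg using Subgroup.closure_induction with
  | mem x hx => exact ⟨1, S.one_mem, by simpa⟩
  | one => exact ⟨1, S.one_mem, by simp⟩
  | mul x y _ _ ihx ihy =>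
    obtain ⟨s₁, hs₁, hxs₁⟩ := ihx
    obtain ⟨s₂, hs₂, hys₂⟩ := ihy
    obtain ⟨a, ha, b, hb, hab⟩ := hS s₁ hs₁ (y * s₂) hys₂
    refine ⟨s₂ * b, S.mul_mem hs₂ hb, ?_⟩
    have hxy : x * y * (s₂ * b) = x * s₁ * a := by rw [mul_assoc x s₁, hab]; group
    exact hxy ▸ S.mul_mem hxs₁ ha
  | inv x _ ih =>
    obtain ⟨s, hs, hxs⟩ := ih
    exact ⟨x * s, hxs, by simpa using hs⟩

theorem IsLeftReversible.isLeftThick (hS : S.IsLeftReversible)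
    (hgen : Subgroup.closure (S : Set G) = ⊤) : S.IsLeftThick := by
  classical
  intro F
  induction F using Finset.induction_on with
  | empty => exact ⟨1, by simp⟩
  | insert g F _ ih =>
    obtain ⟨x, hx⟩ := ih
    obtain ⟨s, hs, hgs⟩ := hS.exists_mul_mem_of_mem_closure (g := g⁻¹ * x) (hgen ▸ trivial)
    refine ⟨x * s, (Finset.forall_mem_insert _ _ _).2 ⟨by rwa [← mul_assoc], fun h hh => ?_⟩⟩
    rw [← mul_assoc]
    exact S.mul_mem (hx h hh) hs

end Submonoid

/-- A submonoid `S` generating a group `G` is left reversible iff it is left thick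
in `G`. -/
theorem stmt18 {G : Type*} [Group G] (S : Submonoid G)
    (hgen : Subgroup.closure (S : Set G) = ⊤) :
    (∀ s t : G, s ∈ S → t ∈ S →
        (((s * ·) '' (S : Set G)) ∩ ((t * ·) '' (S : Set G))).Nonempty) ↔
      (∀ (n : ℕ) (g : Fin n → G), (⋂ i, (g i * ·) '' (S : Set G)).Nonempty) := by
  constructor
  · intro hrev n g
    classical
    have hS : S.IsLeftReversible := fun s hs t ht => by
      obtain ⟨_, ⟨a, ha, rfl⟩, b, hb, hab⟩ := hrev s t hs ht
      exact ⟨a, ha, b, hb, hab.symm⟩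
    obtain ⟨x, hx⟩ := hS.isLeftThick hgen (Finset.univ.image g)
    exact ⟨x, mem_iInter.2 fun i => ⟨_, hx (g i) (by simp), mul_inv_cancel_left _ _⟩⟩
  · intro hthick s t _ _
    obtain ⟨x, hx⟩ := hthick 2 ![s, t]
    rw [mem_iInter] at hx
    exact ⟨x, by simpa using hx 0, by simpa using hx 1⟩
end

section
/- Let S be a submonoid of a group G that generates G and is left thick in G, and let H be a group. Then every monoid homomorphism φ : S → H extends uniquely to a group homomorphism φ' : G → H. -/
/-!
Thickness applied to the pair `g, 1` gives `gS ∩ S ≠ ∅`, so every `g : G` is a right fraction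
`p u⁻¹` with `p, u ∈ S`, i.e. `G = S S⁻¹`. Any extension must send `p u⁻¹` to `φ p (φ u)⁻¹`, which
gives uniqueness. For existence, this value does not depend on the fraction, because two fractions
of the same element have a common refinement; and it is multiplicative, because writing
`u⁻¹ q = a b⁻¹` turns `(p u⁻¹)(q v⁻¹)` into the fraction `(p a)(v b)⁻¹`.
-/

namespace Submonoid

variable {G H : Type*} [Group G] [Group H] {S : Submonoid G}

theorem exists_mul_inv_eq_of_thick
    (hthick : ∀ (n : ℕ) (g : Fin n → G), (⋂ i, (g i * ·) '' (S : Set G)).Nonempty) (g : G) :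
    ∃ p u : S, (p : G) * (u : G)⁻¹ = g := by
  obtain ⟨x, hx⟩ := hthick 2 ![g, 1]
  simp only [Set.mem_iInter] at hx
  obtain ⟨u, hu, rfl⟩ := hx 0
  obtain ⟨p, hp, hpx⟩ := hx 1
  refine ⟨⟨p, hp⟩, ⟨u, hu⟩, ?_⟩
  rw [mul_inv_eq_iff_eq_mul]
  simpa using hpx

theorem map_mul_eq_map_mul_of_coe_mul_eq (φ : S →* H) {a b c d : S}
    (h : (a : G) * b = c * d) : φ a * φ b = φ c * φ d := by
  rw [← map_mul, ← map_mul]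
  exact congrArg φ (Subtype.ext (by simpa using h))

theorem map_mul_inv_eq_of_coe_mul_inv_eq (hS : ∀ g : G, ∃ p u : S, (p : G) * (u : G)⁻¹ = g)
    (φ : S →* H) {p q u v : S} (h : (p : G) * (u : G)⁻¹ = q * (v : G)⁻¹) :
    φ p * (φ u)⁻¹ = φ q * (φ v)⁻¹ := by
  obtain ⟨w, x, hwx⟩ := hS ((u : G)⁻¹ * v)
  have hux : (u : G) * w = v * x := by
    rw [← mul_inv_eq_iff_eq_mul, mul_assoc, hwx, mul_inv_cancel_left]
  have hpq : (p : G) * w = q * x :=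
    calc (p : G) * w = p * (u : G)⁻¹ * (u * w) := by group
      _ = q * x := by rw [h, hux]; group
  calc φ p * (φ u)⁻¹ = φ p * φ w * (φ u * φ w)⁻¹ := by group
    _ = φ q * φ x * (φ v * φ x)⁻¹ := by
      rw [map_mul_eq_map_mul_of_coe_mul_eq φ hux, map_mul_eq_map_mul_of_coe_mul_eq φ hpq]
    _ = φ q * (φ v)⁻¹ := by group

section Lift

variable (hS : ∀ g : G, ∃ p u : S, (p : G) * (u : G)⁻¹ = g) (φ : S →* H)

noncomputable def fracLiftFun (g : G) : H :=
  φ (hS g).choose * (φ (hS g).choose_spec.choose)⁻¹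

theorem fracLiftFun_mul_inv (p u : S) : fracLiftFun hS φ (p * (u : G)⁻¹) = φ p * (φ u)⁻¹ :=
  map_mul_inv_eq_of_coe_mul_inv_eq hS φ (hS _).choose_spec.choose_spec

theorem fracLiftFun_mul (g h : G) :
    fracLiftFun hS φ (g * h) = fracLiftFun hS φ g * fracLiftFun hS φ h := by
  obtain ⟨p, u, rfl⟩ := hS g
  obtain ⟨q, v, rfl⟩ := hS h
  obtain ⟨a, b, hab⟩ := hS ((u : G)⁻¹ * q)
  have hprod : (p : G) * (u : G)⁻¹ * (q * (v : G)⁻¹) =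
      ((p * a : S) : G) * ((v * b : S) : G)⁻¹ :=
    calc (p : G) * (u : G)⁻¹ * (q * (v : G)⁻¹) = p * ((u : G)⁻¹ * q) * (v : G)⁻¹ := by group
      _ = _ := by rw [← hab]; simp only [coe_mul]; group
  have hua : φ a = (φ u)⁻¹ * (φ q * φ b) := by
    refine eq_inv_mul_of_mul_eq (map_mul_eq_map_mul_of_coe_mul_eq φ ?_)
    rw [← mul_inv_eq_iff_eq_mul, mul_assoc, hab, mul_inv_cancel_left]
  rw [hprod, fracLiftFun_mul_inv, fracLiftFun_mul_inv, fracLiftFun_mul_inv, map_mul, map_mul, hua]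
  group

noncomputable def fracLift : G →* H :=
  MonoidHom.mk' (fracLiftFun hS φ) (fracLiftFun_mul hS φ)

theorem fracLift_coe (s : S) : fracLift hS φ s = φ s := by
  simpa [fracLift] using fracLiftFun_mul_inv hS φ s 1

theorem eq_fracLift {ψ : G →* H} (hψ : ∀ s : S, ψ s = φ s) : ψ = fracLift hS φ := by
  ext g
  obtain ⟨p, u, rfl⟩ := hS g
  simp only [map_mul, map_inv, hψ, fracLift_coe]

end Lift

end Submonoid

theorem stmt19_general {G H : Type*} [Group G] [Group H] (S : Submonoid G)
    (hthick : ∀ (n : ℕ) (g : Fin n → G), (⋂ i, (g i * ·) '' (S : Set G)).Nonempty)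
    (φ : S →* H) :
    ∃! ψ : G →* H, ∀ s : S, ψ s = φ s := by
  have hS := Submonoid.exists_mul_inv_eq_of_thick hthick
  exact ⟨Submonoid.fracLift hS φ, Submonoid.fracLift_coe hS φ,
    fun _ hψ ↦ Submonoid.eq_fracLift hS φ hψ⟩

/-- A monoid homomorphism from a left thick generating submonoid `S` of a group `G`
into a group `H` extends uniquely to a group homomorphism `G → H`. -/
theorem stmt19 {G H : Type*} [Group G] [Group H] (S : Submonoid G)
    (hgen : Subgroup.closure (S : Set G) = ⊤)
    (hthick : ∀ (n : ℕ) (g : Fin n → G), (⋂ i, (g i * ·) '' (S : Set G)).Nonempty)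
    (φ : S →* H) :
    ∃! ψ : G →* H, ∀ s : S, ψ s = φ s :=
  stmt19_general S hthick φ
end
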